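/- Let a > 1, λ ≥ 0, μ ≥ 1, λ ≠ μ, r ≥ 1. If a k-edge-coloring of G = K(a^{(p)};λ,μ) can be embedded into a Hamiltonian decomposition of G* = K(a^{(p+r)};λ,μ), then: (i) k = (λ(a−1) + μa(p+r−1))/2; (ii) λ ≤ μa(p+r−1); (iii) every component of each color class G(j) is a path (possibly of length 0), 1 ≤ j ≤ k; and (iv) the number of components ω_j of G(j) satisfies ω_j ≤ ar for 1 ≤ j ≤ k. -/

import Mathlib

open Finset

/-- The vertex set of `K(a^{(p)};λ,μ)`: `p` parts, each of size `a`. -/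
abbrev KV (p a : ℕ) := Fin p × Fin a

/-- The edge multiplicity function of `K(a^{(p)};λ,μ)`: vertices in the same
part are joined by `lam` edges, vertices in different parts by `mu` edges. -/
def Kmult (p a lam mu : ℕ) (u v : KV p a) : ℕ :=
  if u = v then 0 else if u.1 = v.1 then lam else mu

/-- The (simple) support graph of a loopless multigraph given by its
multiplicity function `w`. -/
def supp {V : Type} (w : V → V → ℕ) : SimpleGraph V where
  Adj u v := u ≠ v ∧ (0 < w u v ∨ 0 < w v u)
  symm := by
    constructor
    intro u v h
    exact ⟨h.1.symm, h.2.symm⟩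
  loopless := by
    constructor
    intro v h
    exact h.1 rfl

/-- The degree of a vertex in a loopless multigraph given by its multiplicity
function. -/
def mdeg {V : Type} [Fintype V] (w : V → V → ℕ) (v : V) : ℕ := ∑ u, w v u

/-- The number of connected components of the (spanning) subgraph given by the
multiplicity function `w`. -/
noncomputable def numComp {V : Type} (w : V → V → ℕ) : ℕ :=
  Nat.card (supp w).ConnectedComponent

/-- Every component of the multigraph given by `w` is a path (possibly of
length `0`): no multiple edges, no cycles, and all degrees at most `2`. -/
def IsPathForest {V : Type} [Fintype V] (w : V → V → ℕ) : Prop :=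
  (∀ u v, w u v ≤ 1) ∧ (supp w).IsAcyclic ∧ (∀ v, mdeg w v ≤ 2)

/-- The loopless multigraph given by `w` is a Hamiltonian cycle of the complete
vertex set `V`: it is connected (and spanning) and every vertex has degree `2`. -/
def IsHamCycle {V : Type} [Fintype V] (w : V → V → ℕ) : Prop :=
  (supp w).Connected ∧ ∀ v, mdeg w v = 2

/-- `c` is a `k`-edge-coloring of `K(a^{(p)};λ,μ)`, recorded by the (symmetric)
multiplicity functions `c j` of its color classes, which partition the edges. -/
def KColoring (p a lam mu k : ℕ) (c : Fin k → KV p a → KV p a → ℕ) : Prop :=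
  (∀ j u v, c j u v = c j v u) ∧ (∀ u v, ∑ j, c j u v = Kmult p a lam mu u v)

/-- The canonical identification of the vertices of `K(a^{(p)};λ,μ)` with the
vertices of the first `p` parts of `K(a^{(p+r)};λ,μ)`. -/
def KVemb (p a r : ℕ) (x : KV p a) : KV (p + r) a := (Fin.castAdd r x.1, x.2)

/-- The `k`-edge-coloring `c` of `K(a^{(p)};λ,μ)` can be embedded into a
Hamiltonian decomposition of `K(a^{(p+r)};λ,μ)`: the coloring extends to a
`k`-edge-coloring of `K(a^{(p+r)};λ,μ)` all of whose color classes are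
Hamiltonian cycles. -/
def EmbedsInHamDecomp (p a lam mu r k : ℕ)
    (c : Fin k → KV p a → KV p a → ℕ) : Prop :=
  ∃ c' : Fin k → KV (p + r) a → KV (p + r) a → ℕ,
    KColoring (p + r) a lam mu k c' ∧
    (∀ j, IsHamCycle (c' j)) ∧
    (∀ j u v, c' j (KVemb p a r u) (KVemb p a r v) = c j u v)

/-- Twice the number of pure edges of `w` lying inside part `i`. -/
def purePairSum (p a : ℕ) (w : KV p a → KV p a → ℕ) (i : Fin p) : ℕ :=
  ∑ x : Fin a, ∑ y : Fin a, w (i, x) (i, y)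

/-- Twice the number of mixed edges of `w` (edges joining different parts). -/
def mixedPairSum (p a : ℕ) (w : KV p a → KV p a → ℕ) : ℕ :=
  ∑ u : KV p a, ∑ v : KV p a, if u.1 ≠ v.1 then w u v else 0

/-!
Each colour class `H` of the extended colouring is a Hamiltonian cycle of `K(a^{(p+r)};λ,μ)`, so
counting degrees at one vertex gives (i). By connectivity, `H` cannot spend the full degree `2`
of every vertex of a nonempty proper vertex set `S` inside `S`. This already excludes cycles and
double edges in `G(j)` (iii). Since twice the number of edges of `H` inside `S` is even, it also
shows that `H` has at most `|S| - 1` edges inside `S`. Taking `S` one part and summing over the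
colours gives (ii). Taking `S` a component of `G(j)` and summing over the components, the
at most `2ar` edge-ends of `H` leaving `G` bound the number of components by `ar` (iv).
-/

open Function

section Multigraph

variable {V : Type} {w : V → V → ℕ}

theorem even_sum_sum_of_symm (hsymm : ∀ u v, w u v = w v u)
    (hloop : ∀ v, w v v = 0) (S : Finset V) : Even (∑ x ∈ S, ∑ y ∈ S, w x y) := by
  classical
  induction S using Finset.induction_on with
  | empty => simp
  | insert a S ha ih =>
    have hcol : ∑ x ∈ S, w x a = ∑ y ∈ S, w a y := sum_congr rfl fun x _ => hsymm x a
    rw [sum_insert ha, sum_insert ha, sum_congr rfl fun x _ => sum_insert ha, sum_add_distrib,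
      hcol, hloop]
    obtain ⟨m, hm⟩ := ih
    exact ⟨∑ y ∈ S, w a y + m, by omega⟩

theorem pos_of_supp_adj (hsymm : ∀ u v, w u v = w v u) {u v : V}
    (h : (supp w).Adj u v) : 0 < w u v :=
  h.2.elim id (hsymm u v ▸ ·)

theorem two_le_sum_support_of_isCycle [DecidableEq V] (hsymm : ∀ u v, w u v = w v u) {x : V}
    {q : (supp w).Walk x x} (hq : q.IsCycle) {u : V} (hu : u ∈ q.support) :
    2 ≤ ∑ y ∈ q.support.toFinset, w u y := by
  obtain ⟨y, z, hyz, hnbr⟩ := Set.ncard_eq_two.mp (hq.ncard_neighborSet_toSubgraph_eq_two hu)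
  have hadj : ∀ t ∈ ({y, z} : Finset V), q.toSubgraph.Adj u t := fun t ht => by
    rw [← SimpleGraph.Subgraph.mem_neighborSet, hnbr]
    simpa using ht
  have hsub : {y, z} ⊆ q.support.toFinset := fun t ht =>
    List.mem_toFinset.mpr (q.mem_verts_toSubgraph.mp (hadj t ht).snd_mem)
  calc 2 = ∑ t ∈ {y, z}, 1 := by rw [sum_pair hyz]
    _ ≤ ∑ t ∈ {y, z}, w u t :=
      sum_le_sum fun t ht => pos_of_supp_adj hsymm (hadj t ht).adj_sub
    _ ≤ _ := sum_le_sum_of_subset hsub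

open Classical in
theorem sum_connectedComponent_eq_mdeg [Fintype V] (x : V) :
    ∑ y with (supp w).connectedComponentMk y = (supp w).connectedComponentMk x, w x y =
      mdeg w x := by
  refine sum_filter_of_ne fun y _ hxy => ?_
  by_cases h : x = y
  · rw [h]
  · exact (SimpleGraph.ConnectedComponent.connectedComponentMk_eq_of_adj
      (show (supp w).Adj x y from ⟨h, Or.inl (Nat.pos_of_ne_zero hxy)⟩)).symm

end Multigraph

section HamiltonianCycle

variable {V : Type} [Fintype V] {w : V → V → ℕ}

theorem IsHamCycle.sum_eq_two (hw : IsHamCycle w) (x : V) : ∑ y, w x y = 2 := hw.2 x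

theorem IsHamCycle.eq_univ_of_two_le_sum (hw : IsHamCycle w) (hsymm : ∀ u v, w u v = w v u)
    {S : Finset V} (hS : S.Nonempty) (hsat : ∀ x ∈ S, 2 ≤ ∑ y ∈ S, w x y) : S = univ := by
  classical
  by_contra hne
  obtain ⟨v, hv⟩ : ∃ v, v ∉ S := by simpa [eq_univ_iff_forall] using hne
  obtain ⟨u, hu⟩ := hS
  obtain ⟨walk⟩ := hw.1.preconnected u v
  obtain ⟨d, -, hd₁, hd₂⟩ := walk.exists_boundary_dart S hu hv
  have hout : ∑ y ∈ Sᶜ, w d.fst y = 0 := by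
    have hsplit := sum_add_sum_compl S (w d.fst)
    have := hw.sum_eq_two d.fst
    have := hsat _ hd₁
    omega
  exact (pos_of_supp_adj hsymm d.adj).ne' (sum_eq_zero_iff.mp hout _ (mem_compl.mpr hd₂))

theorem IsHamCycle.le_one (hw : IsHamCycle w) (hsymm : ∀ u v, w u v = w v u)
    (hcard : 3 ≤ Fintype.card V) (u v : V) : w u v ≤ 1 := by
  classical
  by_contra! h
  replace h : 2 ≤ w u v := h
  have hsat : ∀ x ∈ ({u, v} : Finset V), 2 ≤ ∑ y ∈ {u, v}, w x y := by
    intro x hx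
    rcases mem_insert.mp hx with rfl | hx
    · exact le_trans h (single_le_sum (fun _ _ => Nat.zero_le _)
        (mem_insert_of_mem (mem_singleton_self v)))
    · rw [mem_singleton.mp hx]
      exact le_trans (hsymm u v ▸ h) (single_le_sum (fun _ _ => Nat.zero_le _)
        (mem_insert_self u {v}))
  have := card_le_two (a := u) (b := v)
  rw [hw.eq_univ_of_two_le_sum hsymm (insert_nonempty u {v}) hsat, card_univ] at this
  omega

theorem IsHamCycle.sum_sum_add_two_le (hw : IsHamCycle w) (hsymm : ∀ u v, w u v = w v u)
    (hloop : ∀ v, w v v = 0) {S : Finset V} (hS : S.Nonempty) (hSu : S ≠ univ) :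
    ∑ x ∈ S, ∑ y ∈ S, w x y + 2 ≤ 2 * #S := by
  have hrow : ∀ x ∈ S, ∑ y ∈ S, w x y ≤ 2 := fun x _ =>
    hw.sum_eq_two x ▸ sum_le_sum_of_subset (subset_univ S)
  have hlt : ∑ x ∈ S, ∑ y ∈ S, w x y < 2 * #S := by
    obtain ⟨x, hx, hlt⟩ : ∃ x ∈ S, ∑ y ∈ S, w x y < 2 := by
      by_contra! h
      exact hSu (hw.eq_univ_of_two_le_sum hsymm hS h)
    calc _ < ∑ _x ∈ S, 2 := sum_lt_sum hrow ⟨x, hx, hlt⟩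
      _ = 2 * #S := by rw [sum_const, smul_eq_mul, mul_comm]
  obtain ⟨m, hm⟩ := even_sum_sum_of_symm hsymm hloop S
  omega

theorem IsHamCycle.two_mul_card_le [DecidableEq V] (hw : IsHamCycle w)
    (hsymm : ∀ u v, w u v = w v u) (S : Finset V) :
    2 * #S ≤ ∑ x ∈ S, ∑ y ∈ S, w x y + 2 * #Sᶜ := by
  have hrows : ∑ x ∈ S, ∑ y, w x y = 2 * #S := by
    rw [sum_congr rfl fun x _ => hw.sum_eq_two x, sum_const, smul_eq_mul, mul_comm]
  have hcut : ∑ x ∈ S, ∑ y ∈ Sᶜ, w x y ≤ 2 * #Sᶜ :=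
    calc ∑ x ∈ S, ∑ y ∈ Sᶜ, w x y ≤ ∑ x, ∑ y ∈ Sᶜ, w x y :=
          sum_le_sum_of_subset (subset_univ S)
      _ = ∑ y ∈ Sᶜ, ∑ x, w y x := by rw [sum_comm]; simp only [hsymm]
      _ = 2 * #Sᶜ := by
          rw [sum_congr rfl fun y _ => hw.sum_eq_two y, sum_const, smul_eq_mul, mul_comm]
  have hsplit :
      ∑ x ∈ S, ∑ y, w x y = ∑ x ∈ S, ∑ y ∈ S, w x y + ∑ x ∈ S, ∑ y ∈ Sᶜ, w x y := by
    rw [← sum_add_distrib]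
    exact sum_congr rfl fun x _ => (sum_add_sum_compl S (w x)).symm
  omega

end HamiltonianCycle

theorem Finset.map_ne_univ_of_not_surjective {W V : Type} [Fintype V] {f : W ↪ V}
    (hf : ¬ Surjective f) (T : Finset W) : T.map f ≠ univ := fun h =>
  hf fun v => by
    obtain ⟨u, -, hu⟩ := mem_map.mp (h ▸ mem_univ v)
    exact ⟨u, hu⟩

section Restriction

variable {V W : Type} [Fintype V] {w : V → V → ℕ} {f : W ↪ V}

theorem IsHamCycle.mdeg_comap_le_two [Fintype W] (hw : IsHamCycle w) (x : W) :
    mdeg (fun u v => w (f u) (f v)) x ≤ 2 :=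
  calc ∑ y, w (f x) (f y) = ∑ y ∈ univ.map f, w (f x) y := (sum_map _ _ _).symm
    _ ≤ 2 := hw.sum_eq_two (f x) ▸ sum_le_sum_of_subset (subset_univ _)

theorem IsHamCycle.isAcyclic_comap (hw : IsHamCycle w) (hsymm : ∀ u v, w u v = w v u)
    (hf : ¬ Surjective f) : (supp fun u v => w (f u) (f v)).IsAcyclic := by
  classical
  intro x q hq
  have hsat : ∀ u ∈ q.support.toFinset.map f, 2 ≤ ∑ y ∈ q.support.toFinset.map f, w u y := by
    simp only [forall_mem_map, sum_map]
    exact fun u hu => two_le_sum_support_of_isCycle (fun _ _ => hsymm _ _) hq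
      (List.mem_toFinset.mp hu)
  exact map_ne_univ_of_not_surjective hf _ (hw.eq_univ_of_two_le_sum hsymm
    ⟨f x, mem_map_of_mem f (List.mem_toFinset.mpr q.start_mem_support)⟩ hsat)

theorem IsHamCycle.isPathForest_comap [Fintype W] (hw : IsHamCycle w)
    (hsymm : ∀ u v, w u v = w v u) (hcard : 3 ≤ Fintype.card V) (hf : ¬ Surjective f) :
    IsPathForest fun u v => w (f u) (f v) :=
  ⟨fun u v => hw.le_one hsymm hcard (f u) (f v), hw.isAcyclic_comap hsymm hf,
    hw.mdeg_comap_le_two⟩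

open Classical in
theorem IsHamCycle.sum_mdeg_component_add_two_le [Fintype W] (hw : IsHamCycle w)
    (hsymm : ∀ u v, w u v = w v u) (hloop : ∀ v, w v v = 0) (hf : ¬ Surjective f)
    (C : (supp fun u v => w (f u) (f v)).ConnectedComponent) :
    ∑ x with (supp fun u v => w (f u) (f v)).connectedComponentMk x = C,
        mdeg (fun u v => w (f u) (f v)) x + 2 ≤
      2 * #{x | (supp fun u v => w (f u) (f v)).connectedComponentMk x = C} := by
  set T : Finset W := {x | (supp fun u v => w (f u) (f v)).connectedComponentMk x = C}
  have hdeg : ∀ x ∈ T, mdeg (fun u v => w (f u) (f v)) x = ∑ y ∈ T, w (f x) (f y) := by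
    intro x hx
    rw [← sum_connectedComponent_eq_mdeg]
    simp only [T, (mem_filter.mp hx).2]
  obtain ⟨x, hx⟩ := C.exists_rep
  have hbound := hw.sum_sum_add_two_le hsymm hloop (S := T.map f)
    ⟨f x, mem_map_of_mem f (mem_filter.mpr ⟨mem_univ x, hx⟩)⟩
    (map_ne_univ_of_not_surjective hf T)
  simp only [sum_map, card_map] at hbound
  rwa [sum_congr rfl hdeg]

theorem IsHamCycle.numComp_comap_le [Fintype W] (hw : IsHamCycle w)
    (hsymm : ∀ u v, w u v = w v u) (hloop : ∀ v, w v v = 0) (hf : ¬ Surjective f) :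
    numComp (fun u v => w (f u) (f v)) ≤ Fintype.card V - Fintype.card W := by
  classical
  set G := supp fun u v => w (f u) (f v)
  let : Fintype G.ConnectedComponent := Fintype.ofFinite _
  have hupper : ∑ x, mdeg (fun u v => w (f u) (f v)) x + 2 * numComp (fun u v => w (f u) (f v))
      ≤ 2 * Fintype.card W :=
    calc _ = ∑ C : G.ConnectedComponent,
          (∑ x with G.connectedComponentMk x = C, mdeg (fun u v => w (f u) (f v)) x + 2) := by
          rw [sum_add_distrib, sum_fiberwise univ G.connectedComponentMk, sum_const, card_univ,
            numComp, Nat.card_eq_fintype_card, smul_eq_mul, mul_comm]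
      _ ≤ ∑ C : G.ConnectedComponent, 2 * #{x | G.connectedComponentMk x = C} :=
          sum_le_sum fun C _ => hw.sum_mdeg_component_add_two_le hsymm hloop hf C
      _ = 2 * Fintype.card W := by
          rw [← mul_sum, ← card_univ,
            card_eq_sum_card_fiberwise (f := G.connectedComponentMk) fun x _ => mem_univ _]
  have hlower := hw.two_mul_card_le hsymm (univ.map f)
  simp only [sum_map, card_map, card_compl, card_univ] at hlower
  simp only [mdeg] at hupper
  exact Nat.le_of_mul_le_mul_left (by omega) two_pos

section CompleteMultipartite

variable {p a lam mu : ℕ}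

theorem sum_Kmult_same_part (i : Fin p) (x : Fin a) :
    ∑ y, Kmult p a lam mu (i, x) (i, y) = lam * (a - 1) := by
  simp [Kmult, sum_ite, filter_ne, mul_comm]

theorem sum_Kmult_other_part {i i' : Fin p} (h : i ≠ i') (x : Fin a) :
    ∑ y, Kmult p a lam mu (i, x) (i', y) = mu * a := by
  simp [Kmult, h, mul_comm]

theorem mdeg_Kmult (v : KV p a) :
    mdeg (Kmult p a lam mu) v = lam * (a - 1) + mu * a * (p - 1) := by
  obtain ⟨i, x⟩ := v
  rw [mdeg, Fintype.sum_prod_type, ← add_sum_erase _ _ (mem_univ i), sum_Kmult_same_part,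
    sum_congr rfl fun i' hi' => sum_Kmult_other_part (ne_of_mem_erase hi').symm x]
  simp [mul_comm]

end CompleteMultipartite

namespace KColoring

variable {p a lam mu k : ℕ} {c : Fin k → KV p a → KV p a → ℕ}

theorem loop_eq_zero (hc : KColoring p a lam mu k c) (j : Fin k) (v : KV p a) : c j v v = 0 :=
  sum_eq_zero_iff.mp ((hc.2 v v).trans (by simp [Kmult])) j (mem_univ j)

theorem two_mul_eq_of_isHamCycle (hc : KColoring p a lam mu k c)
    (hham : ∀ j, IsHamCycle (c j)) (v : KV p a) :
    2 * k = lam * (a - 1) + mu * a * (p - 1) :=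
  calc 2 * k = ∑ j, mdeg (c j) v := by simp [fun j => (hham j).2 v, mul_comm]
    _ = mdeg (Kmult p a lam mu) v := by
          simp only [mdeg]
          rw [sum_comm]
          exact sum_congr rfl fun u _ => hc.2 v u
    _ = _ := mdeg_Kmult v

theorem le_of_isHamCycle (hc : KColoring p a lam mu k c) (hham : ∀ j, IsHamCycle (c j))
    (ha : 1 < a) (hp : 2 ≤ p) : lam ≤ mu * a * (p - 1) := by
  let i : Fin p := ⟨0, by omega⟩
  let x₀ : Fin a := ⟨0, by omega⟩
  have hpart : ∀ j, ∑ x, ∑ y, c j (i, x) (i, y) + 2 ≤ 2 * a := by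
    intro j
    have hne : univ.map (Embedding.sectR i (Fin a)) ≠ univ := fun h => by
      have := h ▸ mem_univ ((⟨1, by omega⟩ : Fin p), x₀)
      simp [i] at this
    simpa [sum_map] using (hham j).sum_sum_add_two_le (hc.1 j) (hc.loop_eq_zero j)
      ⟨(i, x₀), by simp⟩ hne
  have hsum : ∑ j, ∑ x, ∑ y, c j (i, x) (i, y) = a * (lam * (a - 1)) := by
    rw [sum_comm]
    simp_rw [sum_comm (s := (univ : Finset (Fin k))), hc.2, sum_Kmult_same_part]
    simp
  have htot : a * (lam * (a - 1)) + 2 * k ≤ a * (2 * k) :=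
    calc _ = ∑ j, (∑ x, ∑ y, c j (i, x) (i, y) + 2) := by
          rw [sum_add_distrib, hsum]; simp [mul_comm]
      _ ≤ ∑ _j : Fin k, 2 * a := sum_le_sum fun j _ => hpart j
      _ = a * (2 * k) := by simp [mul_comm, mul_left_comm]
  rw [hc.two_mul_eq_of_isHamCycle hham (i, x₀)] at htot
  obtain ⟨b, rfl⟩ : ∃ b, a = b + 1 := ⟨a - 1, by omega⟩
  simp only [Nat.add_sub_cancel] at htot ⊢
  have : b * lam ≤ b * (mu * (b + 1) * (p - 1)) := by nlinarith
  exact Nat.le_of_mul_le_mul_left this (by omega)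

end KColoring

theorem necessity_of_embedding_conditions_general
    (a p lam mu r k : ℕ) (ha : 1 < a) (hp : 1 ≤ p) (hr : 1 ≤ r)
    (c : Fin k → KV p a → KV p a → ℕ)
    (hemb : EmbedsInHamDecomp p a lam mu r k c) :
    2 * k = lam * (a - 1) + mu * a * (p + r - 1) ∧
      lam ≤ mu * a * (p + r - 1) ∧
      (∀ j, IsPathForest (c j)) ∧
      (∀ j, numComp (c j) ≤ a * r) := by
  obtain ⟨c', hc', hham, hres⟩ := hemb
  -- `KVemb p a r`, as an embedding
  let f : KV p a ↪ KV (p + r) a := (Fin.castAddEmb r).prodMap (Embedding.refl (Fin a))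
  have hc : ∀ j, c j = fun u v => c' j (f u) (f v) := fun j =>
    funext₂ fun u v => (hres j u v).symm
  have hcard : Fintype.card (KV (p + r) a) = Fintype.card (KV p a) + a * r := by
    simp only [Fintype.card_prod, Fintype.card_fin]; ring
  have hcard₃ : 3 ≤ Fintype.card (KV (p + r) a) := by
    simp only [Fintype.card_prod, Fintype.card_fin]; nlinarith
  have hf : ¬ Surjective f := fun h => by
    have := Fintype.card_le_of_surjective f h
    nlinarith
  refine ⟨hc'.two_mul_eq_of_isHamCycle hham (⟨0, by omega⟩, ⟨0, by omega⟩),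
    hc'.le_of_isHamCycle hham ha (by omega), fun j => ?_, fun j => ?_⟩
  · rw [hc j]
    exact (hham j).isPathForest_comap (hc'.1 j) hcard₃ hf
  · rw [hc j]
    have := (hham j).numComp_comap_le (hc'.1 j) (hc'.loop_eq_zero j) hf
    omega

/-- **Necessity of the conditions of Theorem 2.** If a `k`-edge-coloring of
`G = K(a^{(p)};λ,μ)` (with `a > 1`, `λ ≥ 0`, `μ ≥ 1`, `λ ≠ μ`, `r ≥ 1`) can be
embedded into a Hamiltonian decomposition of `K(a^{(p+r)};λ,μ)`, then
(i) `k = (λ(a−1)+μa(p+r−1))/2`, (ii) `λ ≤ μa(p+r−1)`, (iii) every component of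
each color class `G(j)` is a path (possibly of length 0), and (iv) the number
of components `ω_j` of `G(j)` satisfies `ω_j ≤ ar`. -/
theorem necessity_of_embedding_conditions
    (a p lam mu r k : ℕ) (ha : 1 < a) (hp : 1 ≤ p) (hmu : 1 ≤ mu)
    (hlm : lam ≠ mu) (hr : 1 ≤ r)
    (c : Fin k → KV p a → KV p a → ℕ) (hc : KColoring p a lam mu k c)
    (hemb : EmbedsInHamDecomp p a lam mu r k c) :
    2 * k = lam * (a - 1) + mu * a * (p + r - 1) ∧
      lam ≤ mu * a * (p + r - 1) ∧
      (∀ j, IsPathForest (c j)) ∧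
      (∀ j, numComp (c j) ≤ a * r) :=
  necessity_of_embedding_conditions_general a p lam mu r k ha hp hr c hemb
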